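/- arXiv:0909.4673 — 2 statements merged into one kernel-verified Lean document; each statement's English description precedes it below -/
import Mathlib

section
/- Measuring a dependently corrected qubit is equivalent to a dependent measurement: for all α ∈ ℝ and s,t ∈ {0,1}, the projector identity ⟨±_α| ∘ X^s Z^t = e^{iφ} ⟨±_{(−1)^s α + tπ}| holds for some phase φ depending only on α, s, t, ± (i.e. the vectors (X^s Z^t)†|±_α⟩ and |±_{(−1)^s α + tπ}⟩ are equal up to a unit complex scalar). -/
open Matrix

/-!
`X` and `Z` are Hermitian, so `(Xˢ Zᵗ)† = Zᵗ Xˢ`. `Z` sends `|±_α⟩` to `|±_{α+π}⟩` exactly, while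
`X` swaps the two amplitudes, which after pulling out the global phase `±e^{iα}` gives `|±_{−α}⟩`.
-/

/-- `|±_α⟩ = (1/√2)(|0⟩ ± e^{iα}|1⟩)`; `ε = false` is `+`, `ε = true` is `−`. -/
noncomputable def ketPM (ε : Bool) (α : ℝ) : Fin 2 → ℂ :=
  ![1 / Real.sqrt 2,
    (if ε then -1 else 1) * Complex.exp ((α : ℂ) * Complex.I) / Real.sqrt 2]

def PauliX : Matrix (Fin 2) (Fin 2) ℂ := !![0, 1; 1, 0]
def PauliZ : Matrix (Fin 2) (Fin 2) ℂ := !![1, 0; 0, -1]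

def Xpow (s : Bool) : Matrix (Fin 2) (Fin 2) ℂ := if s then PauliX else 1
def Zpow (t : Bool) : Matrix (Fin 2) (Fin 2) ℂ := if t then PauliZ else 1

lemma PauliX_isHermitian : PauliX.IsHermitian := by
  ext i j; fin_cases i <;> fin_cases j <;> simp [PauliX]

lemma PauliZ_isHermitian : PauliZ.IsHermitian := by
  ext i j; fin_cases i <;> fin_cases j <;> simp [PauliZ]

lemma Xpow_isHermitian (s : Bool) : (Xpow s).IsHermitian := by
  cases s
  · exact isHermitian_one
  · exact PauliX_isHermitian

lemma Zpow_isHermitian (t : Bool) : (Zpow t).IsHermitian := by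
  cases t
  · exact isHermitian_one
  · exact PauliZ_isHermitian

lemma PauliZ_mulVec_ketPM (ε : Bool) (α : ℝ) :
    PauliZ *ᵥ ketPM ε α = ketPM ε (α + Real.pi) := by
  ext i
  fin_cases i <;>
    simp [PauliZ, ketPM, mulVec, dotProduct, Fin.sum_univ_two, add_mul, Complex.exp_add,
      Complex.exp_pi_mul_I, neg_div]

lemma PauliX_mulVec_ketPM (ε : Bool) (α : ℝ) :
    PauliX *ᵥ ketPM ε α =
      ((if ε then -1 else 1) * Complex.exp ((α : ℂ) * Complex.I)) • ketPM ε (-α) := by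
  have hexp : Complex.exp ((α : ℂ) * Complex.I) ≠ 0 := Complex.exp_ne_zero _
  ext i
  cases ε <;> fin_cases i <;>
    · simp [PauliX, ketPM, mulVec, dotProduct, Fin.sum_univ_two, Complex.exp_neg]
      try field_simp

lemma Zpow_mulVec_ketPM (t ε : Bool) (α : ℝ) :
    Zpow t *ᵥ ketPM ε α = ketPM ε (α + if t then Real.pi else 0) := by
  cases t
  · simp [Zpow]
  · simpa [Zpow] using PauliZ_mulVec_ketPM ε α

lemma Xpow_mulVec_ketPM (s ε : Bool) (α : ℝ) :
    ∃ φ : ℂ, ‖φ‖ = 1 ∧ Xpow s *ᵥ ketPM ε α = φ • ketPM ε (if s then -α else α) := by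
  cases s
  · exact ⟨1, norm_one, by simp [Xpow]⟩
  · refine ⟨_, ?_, PauliX_mulVec_ketPM ε α⟩
    cases ε <;> simp [Complex.norm_exp]

/-- Measuring a dependently corrected qubit is a dependent measurement:
`(Xˢ Zᵗ)† |±_α⟩` equals `|±_{(−1)ˢ α + tπ}⟩` up to a unit phase. -/
theorem dependent_measurement (α : ℝ) (s t ε : Bool) :
    ∃ φ : ℂ, ‖φ‖ = 1 ∧
      (Xpow s * Zpow t)ᴴ.mulVec (ketPM ε α) =
        φ • ketPM ε ((if s then -α else α) + (if t then Real.pi else 0)) := by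
  obtain ⟨φ, hφ, hX⟩ := Xpow_mulVec_ketPM s ε α
  refine ⟨φ, hφ, ?_⟩
  rw [conjTranspose_mul, (Xpow_isHermitian s).eq, (Zpow_isHermitian t).eq, ← mulVec_mulVec, hX,
    mulVec_smul, Zpow_mulVec_ketPM]
end

section
/- For the dependency-based depth of command sequences: depth(t₁ ⊗ t₂) = max(depth t₁, depth t₂) when t₁ and t₂ act on disjoint qubit sets, and depth(t₂ ∘ t₁) ≤ depth t₁ + depth t₂, where depth of a sequence A is the maximal length of a subsequence (p_1,…,p_k) of A with dom(p_x) ∩ dom(p_{x+1}) ≠ ∅ for all x. -/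
/-- The dependency depth of a command sequence (each command represented by its domain):
the greatest length of a sublist in which consecutive commands have overlapping domains. -/
noncomputable def cmdDepth {V : Type*} [DecidableEq V] (A : List (Finset V)) : ℕ :=
  sSup {k | ∃ l : List (Finset V),
    l.Sublist A ∧ l.Chain' (fun a b => (a ∩ b).Nonempty) ∧ l.length = k}

/-! A dependency chain inside `t₁ ++ t₂` splits as a chain inside `t₁` followed by a chain inside
`t₂`, which gives subadditivity. When every domain in `t₁` is disjoint from every domain in `t₂`,
no link can cross the junction, so one of the two pieces is empty. -/

namespace List

variable {α : Type*} {R : α → α → Prop}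

theorem IsChain.sublist_or_sublist_of_sublist_append {l t₁ t₂ : List α} (hc : l.IsChain R)
    (hs : l <+ t₁ ++ t₂) (hR : ∀ a ∈ t₁, ∀ b ∈ t₂, ¬ R a b) : l <+ t₁ ∨ l <+ t₂ := by
  obtain ⟨l₁, l₂, rfl, hs₁, hs₂⟩ := sublist_append_iff.1 hs
  rcases eq_or_ne l₁ [] with rfl | h₁
  · exact .inr hs₂
  rcases eq_or_ne l₂ [] with rfl | h₂
  · exact .inl (by simpa using hs₁)
  exact absurd (hc.rel_getLast_head_of_append h₁ h₂)
    (hR _ (hs₁.mem (getLast_mem h₁)) _ (hs₂.mem (head_mem h₂)))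

end List

section cmdDepth

open List

variable {V : Type*} [DecidableEq V]

theorem length_le_cmdDepth {A l : List (Finset V)} (hs : l <+ A)
    (hc : l.IsChain fun a b => (a ∩ b).Nonempty) : l.length ≤ cmdDepth A :=
  le_csSup ⟨A.length, by rintro _ ⟨l, hs, -, rfl⟩; exact hs.length_le⟩ ⟨l, hs, hc, rfl⟩

theorem cmdDepth_le {A : List (Finset V)} {n : ℕ}
    (h : ∀ l, l <+ A → l.IsChain (fun a b => (a ∩ b).Nonempty) → l.length ≤ n) :
    cmdDepth A ≤ n :=
  csSup_le ⟨0, [], nil_sublist A, isChain_nil, rfl⟩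
    (by rintro _ ⟨l, hs, hc, rfl⟩; exact h l hs hc)

theorem cmdDepth_mono {A B : List (Finset V)} (h : A <+ B) : cmdDepth A ≤ cmdDepth B :=
  cmdDepth_le fun _ hs hc => length_le_cmdDepth (hs.trans h) hc

theorem cmdDepth_append_le (u₁ u₂ : List (Finset V)) :
    cmdDepth (u₁ ++ u₂) ≤ cmdDepth u₁ + cmdDepth u₂ :=
  cmdDepth_le fun l hs hc => by
    obtain ⟨l₁, l₂, rfl, hs₁, hs₂⟩ := sublist_append_iff.1 hs
    rw [length_append]
    exact add_le_add (length_le_cmdDepth hs₁ hc.left_of_append)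
      (length_le_cmdDepth hs₂ hc.right_of_append)

theorem cmdDepth_append_of_disjoint {t₁ t₂ : List (Finset V)}
    (hdisj : ∀ a ∈ t₁, ∀ b ∈ t₂, Disjoint a b) :
    cmdDepth (t₁ ++ t₂) = max (cmdDepth t₁) (cmdDepth t₂) := by
  refine le_antisymm (cmdDepth_le fun l hs hc => ?_)
    (max_le (cmdDepth_mono (sublist_append_left _ _))
      (cmdDepth_mono (sublist_append_right _ _)))
  have hR : ∀ a ∈ t₁, ∀ b ∈ t₂, ¬ (a ∩ b).Nonempty := fun a ha b hb h =>
    Finset.not_disjoint_iff_nonempty_inter.2 h (hdisj a ha b hb)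
  rcases hc.sublist_or_sublist_of_sublist_append hs hR with h | h
  · exact le_max_of_le_left (length_le_cmdDepth h hc)
  · exact le_max_of_le_right (length_le_cmdDepth h hc)

end cmdDepth

/-- Depth of a tensor composition (concatenation with disjoint qubit sets) is the max of
the depths; depth of a sequential composition (plain concatenation) is at most the sum. -/
theorem depth_tensor_and_seq {V : Type*} [DecidableEq V]
    (t₁ t₂ : List (Finset V)) (hdisj : ∀ a ∈ t₁, ∀ b ∈ t₂, Disjoint a b) :
    cmdDepth (t₁ ++ t₂) = max (cmdDepth t₁) (cmdDepth t₂) ∧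
    ∀ u₁ u₂ : List (Finset V), cmdDepth (u₁ ++ u₂) ≤ cmdDepth u₁ + cmdDepth u₂ :=
  ⟨cmdDepth_append_of_disjoint hdisj, cmdDepth_append_le⟩
end
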